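/- Let G be a finite 2-group of exponent 4 with exactly three cyclic subgroups of order 4, and let X be a normal cyclic subgroup of G of order 4 with centralizer C = C_G(X); then C/X is elementary abelian (of exponent 2). -/
import Mathlib


/-- The number of cyclic subgroups of a group `G` (including the trivial subgroup). -/
noncomputable def numCyclic (G : Type*) [Group G] : ℕ :=
  Nat.card {H : Subgroup G // IsCyclic H}

/-- The number of cyclic subgroups of order `n` in a group `G`. -/
noncomputable def numCyclicOfOrder (G : Type*) [Group G] (n : ℕ) : ℕ :=
  Nat.card {H : Subgroup G // IsCyclic H ∧ Nat.card H = n}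

private lemma orderOf_eq_four {G : Type*} [Group G] {a : G} (h4 : a ^ 4 = 1)
    (h2 : a ^ 2 ≠ 1) : orderOf a = 4 := by
  have hd : orderOf a ∣ 2 ^ 2 := orderOf_dvd_of_pow_eq_one (by norm_num at h4 ⊢; exact h4)
  rcases (Nat.dvd_prime_pow Nat.prime_two).mp hd with ⟨k, hk, he⟩
  interval_cases k
  · exact absurd (by rw [orderOf_eq_one_iff.mp he, one_pow]) h2
  · exact absurd (by rw [← he] at *; exact pow_orderOf_eq_one a) (by rw [he] at *; exact h2)
  · simpa using he

private lemma subgroup_eq_of_le_of_card_le {G : Type*} [Group G] [Finite G]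
    {H K : Subgroup G} (h : H ≤ K) (hc : Nat.card K ≤ Nat.card H) : H = K := by
  have := Set.eq_of_subset_of_ncard_le (show (H : Set G) ⊆ K from h)
    (by rw [← Nat.card_coe_set_eq, ← Nat.card_coe_set_eq]; exact hc) (Set.toFinite _)
  exact SetLike.coe_injective this

private lemma isCyclic_zpowers {G : Type*} [Group G] (a : G) :
    IsCyclic (Subgroup.zpowers a) := by
  refine ⟨⟨⟨a, Subgroup.mem_zpowers a⟩, fun z => ?_⟩⟩
  obtain ⟨k, hk⟩ := z.2
  exact ⟨k, Subtype.ext (by simpa using hk)⟩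

theorem quotient_exponent_two (G : Type*) [Group G] [Fintype G]
    (hp : IsPGroup 2 G) (hexp : ∀ g : G, g ^ 4 = 1)
    (hc4 : numCyclicOfOrder G 4 = 3)
    (X : Subgroup G) (hX : X.Normal) (hXc : IsCyclic X) (hX4 : Nat.card X = 4) :
    ∀ g ∈ Subgroup.centralizer (X : Set G), g ^ 2 ∈ X := by
  intro g hg
  by_contra hgX
  obtain ⟨y, hy⟩ := hXc.exists_generator
  set x : G := (y : G) with hxdef
  have hXz : X = Subgroup.zpowers x := by
    apply le_antisymm
    · intro z hz
      obtain ⟨k, hk⟩ := hy ⟨z, hz⟩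
      exact ⟨k, by simpa using congrArg Subtype.val hk⟩
    · exact Subgroup.zpowers_le.mpr y.2
  have hxX : x ∈ X := y.2
  have hx4 : orderOf x = 4 := by rw [← Nat.card_zpowers, ← hXz]; exact hX4
  have hx2 : x ^ 2 ≠ 1 := by
    intro h
    have := orderOf_dvd_of_pow_eq_one h
    rw [hx4] at this; omega
  have hc : Commute x g := (Subgroup.mem_centralizer_iff.mp hg x hxX)
  -- g has order 4
  have hg2 : g ^ 2 ≠ 1 := fun h => hgX (h ▸ X.one_mem)
  have hgo : orderOf g = 4 := orderOf_eq_four (hexp g) hg2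
  have hgnX : g ∉ X := fun h => hgX (by simpa [sq] using X.mul_mem h h)
  -- x is not a power of g
  have hxg : x ∉ Subgroup.zpowers g := by
    intro h
    have hle : X ≤ Subgroup.zpowers g := hXz ▸ Subgroup.zpowers_le.mpr h
    have : X = Subgroup.zpowers g :=
      subgroup_eq_of_le_of_card_le hle (by rw [Nat.card_zpowers, hgo, hX4])
    exact hgnX (this ▸ Subgroup.mem_zpowers g)
  -- the four subgroups
  have hxg2X : x * g ^ 2 ∉ X := fun h => hgX (by
    have := X.mul_mem (X.inv_mem hxX) h
    simpa [mul_assoc] using this)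
  have hxgX : x * g ∉ X := fun h => hgnX (by
    have := X.mul_mem (X.inv_mem hxX) h
    simpa [mul_assoc] using this)
  have hordxg : orderOf (x * g) = 4 := by
    apply orderOf_eq_four (hexp _)
    rw [hc.mul_pow]
    intro h
    have : g ^ 2 = (x ^ 2)⁻¹ := eq_inv_of_mul_eq_one_right h
    exact hgX (this ▸ X.inv_mem (X.pow_mem hxX 2))
  have hordxg2 : orderOf (x * g ^ 2) = 4 := by
    apply orderOf_eq_four (hexp _)
    rw [(hc.pow_right 2).mul_pow, ← pow_mul]
    norm_num [hexp g]
    exact hx2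
  -- distinctness
  have key : ∀ a : G, orderOf a = 4 → x ∈ Subgroup.zpowers a → g ∈ Subgroup.zpowers a →
      False := by
    intro a ha hxa hga
    have hle : Subgroup.zpowers g ≤ Subgroup.zpowers a := Subgroup.zpowers_le.mpr hga
    have heq : Subgroup.zpowers g = Subgroup.zpowers a :=
      subgroup_eq_of_le_of_card_le hle (by rw [Nat.card_zpowers, Nat.card_zpowers, ha, hgo])
    exact hxg (heq ▸ hxa)
  -- build the injection into cyclic subgroups of order 4
  set T := {H : Subgroup G // IsCyclic H ∧ Nat.card H = 4} with hT
  let A : T := ⟨X, hXc, hX4⟩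
  let B : T := ⟨Subgroup.zpowers g, isCyclic_zpowers g, by rw [Nat.card_zpowers, hgo]⟩
  let C : T := ⟨Subgroup.zpowers (x * g), isCyclic_zpowers _, by rw [Nat.card_zpowers, hordxg]⟩
  let D : T := ⟨Subgroup.zpowers (x * g ^ 2), isCyclic_zpowers _,
    by rw [Nat.card_zpowers, hordxg2]⟩
  have hAB : X ≠ Subgroup.zpowers g := fun h => hgnX (h ▸ Subgroup.mem_zpowers g)
  have hAC : X ≠ Subgroup.zpowers (x * g) := fun h => hxgX (h ▸ Subgroup.mem_zpowers _)
  have hAD : X ≠ Subgroup.zpowers (x * g ^ 2) := fun h => hxg2X (h ▸ Subgroup.mem_zpowers _)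
  have hBC : Subgroup.zpowers g ≠ Subgroup.zpowers (x * g) := by
    intro h
    have hxgB : x * g ∈ Subgroup.zpowers g := h ▸ Subgroup.mem_zpowers _
    have : x ∈ Subgroup.zpowers g := by
      have := Subgroup.mul_mem _ hxgB (Subgroup.inv_mem _ (Subgroup.mem_zpowers g))
      simpa [mul_assoc] using this
    exact hxg this
  have hBD : Subgroup.zpowers g ≠ Subgroup.zpowers (x * g ^ 2) := by
    intro h
    have hxgB : x * g ^ 2 ∈ Subgroup.zpowers g := h ▸ Subgroup.mem_zpowers _
    have : x ∈ Subgroup.zpowers g := by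
      have := Subgroup.mul_mem _ hxgB (Subgroup.inv_mem _ (Subgroup.pow_mem _ (Subgroup.mem_zpowers g) 2))
      simpa [mul_assoc] using this
    exact hxg this
  have hCD : Subgroup.zpowers (x * g) ≠ Subgroup.zpowers (x * g ^ 2) := by
    intro h
    have h1 : x * g ^ 2 ∈ Subgroup.zpowers (x * g) := h ▸ Subgroup.mem_zpowers _
    have hgC : g ∈ Subgroup.zpowers (x * g) := by
      have := Subgroup.mul_mem _ (Subgroup.inv_mem _ (Subgroup.mem_zpowers (x * g))) h1
      simpa [mul_assoc, sq] using this
    exact key (x * g) hordxg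
      (by
        have := Subgroup.mul_mem _ (Subgroup.mem_zpowers (x * g)) (Subgroup.inv_mem _ hgC)
        simpa [mul_assoc] using this) hgC
  -- conclude
  have hf : Function.Injective (![A, B, C, D]) := by
    intro i j hij
    have hne : ∀ (P Q : T), (P : Subgroup G) ≠ Q → P ≠ Q := fun P Q h hh => h (congrArg _ hh)
    fin_cases i <;> fin_cases j <;>
      simp only [Matrix.cons_val_zero, Matrix.cons_val_one, Matrix.head_cons,
        Matrix.cons_val_two, Matrix.tail_cons, Matrix.cons_val_three] at hij <;>
      first
        | rfl
        | (exact absurd hij (by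
            first
              | exact hne _ _ hAB | exact hne _ _ hAB.symm
              | exact hne _ _ hAC | exact hne _ _ hAC.symm
              | exact hne _ _ hAD | exact hne _ _ hAD.symm
              | exact hne _ _ hBC | exact hne _ _ hBC.symm
              | exact hne _ _ hBD | exact hne _ _ hBD.symm
              | exact hne _ _ hCD | exact hne _ _ hCD.symm))
  have hle : 4 ≤ Nat.card T := by
    have := Nat.card_le_card_of_injective _ hf
    simpa using this
  rw [show Nat.card T = numCyclicOfOrder G 4 from rfl, hc4] at hle
  omega
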